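/- In the approximate-diameter lower-bound graph G_{x,y}, for all nodes u, v ∈ A ∪ B ∪ {c̄_A, c̄_B}, if there is no index i ∈ {0,…,k−1} with {u,v} = {a^i, b^i}, then dist(u,v) ≤ 2q + 1. -/

import Mathlib

/-! Every hub lies within `q` of the centre `c_A` or `c_B` of its side (along the
subdivided edges `a^i c_A` and `c_A c̄_A`), so hubs on the same side are within `2q` of
each other. Across the sides, the edge `c̄_A c̄_B` gives `2q + 1` once one endpoint is
`c̄_A` or `c̄_B`. Finally, for `i ≠ j` the indices differ in some bit `h < log k`, and the
`h`-th bit nodes of `a^i` and `b^j` are joined by a cross edge, which gives a path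
`a^i ⇝ bit ⇝ bit ⇝ b^j` of length `q + 1 + q`. -/

/-- The "backbone" vertices of the approximate-diameter lower-bound graph:
the original vertices `a i`, `ā i`, `fA h`, `tA h`, `cA`, `cA'` (= c̄_A) on
Alice's side, and `b i`, `b̄ i`, `fB h`, `tB h`, `cB`, `cB'` (= c̄_B) on Bob's side. -/
inductive ADBase (k logk : ℕ) where
  | a (i : Fin k)
  | abar (i : Fin k)
  | fA (h : Fin logk)
  | tA (h : Fin logk)
  | cA
  | cA'
  | b (i : Fin k)
  | bbar (i : Fin k)
  | fB (h : Fin logk)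
  | tB (h : Fin logk)
  | cB
  | cB'
deriving DecidableEq

/-- The fixed one-side edges that get subdivided into paths of `q` edges
(described here for Alice's side; Bob's side is symmetric):
`aBit i h` is the edge joining `a i` to its `h`-th bit-node (`fA h` if bit `h`
of `i` is `0`, else `tA h`); `aC i` joins `a i` to `cA`; `fC h` joins `fA h`
to `cA'`; `tC h` joins `tA h` to `cA'`; `cc` joins `cA` to `cA'`;
`bar i` is the path joining `a i` to `ā i`. -/
inductive SideEdge (k logk : ℕ) where
  | aBit (i : Fin k) (h : Fin logk)
  | aC (i : Fin k)
  | fC (h : Fin logk)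
  | tC (h : Fin logk)
  | cc
  | bar (i : Fin k)
deriving DecidableEq

/-- Vertices of the approximate-diameter lower-bound graph: the backbone vertices
together with the `q - 1` internal vertices of each subdivided edge on each side. -/
inductive ADVertex (k logk q : ℕ) where
  | base (v : ADBase k logk)
  | pA (e : SideEdge k logk) (t : Fin (q - 1))
  | pB (e : SideEdge k logk) (t : Fin (q - 1))
deriving DecidableEq

/-- Source endpoint of a subdivided edge on Alice's side. -/
def srcA (k logk : ℕ) : SideEdge k logk → ADBase k logk
  | .aBit i _ => .a i
  | .aC i => .a i
  | .fC h => .fA h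
  | .tC h => .tA h
  | .cc => .cA
  | .bar i => .a i

/-- Target endpoint of a subdivided edge on Alice's side. -/
def tgtA (k logk : ℕ) : SideEdge k logk → ADBase k logk
  | .aBit i h => if i.val.testBit h.val then .tA h else .fA h
  | .aC _ => .cA
  | .fC _ => .cA'
  | .tC _ => .cA'
  | .cc => .cA'
  | .bar i => .abar i

/-- Source endpoint of a subdivided edge on Bob's side. -/
def srcB (k logk : ℕ) : SideEdge k logk → ADBase k logk
  | .aBit i _ => .b i
  | .aC i => .b i
  | .fC h => .fB h
  | .tC h => .tB h
  | .cc => .cB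
  | .bar i => .b i

/-- Target endpoint of a subdivided edge on Bob's side. -/
def tgtB (k logk : ℕ) : SideEdge k logk → ADBase k logk
  | .aBit i h => if i.val.testBit h.val then .tB h else .fB h
  | .aC _ => .cB
  | .fC _ => .cB'
  | .tC _ => .cB'
  | .cc => .cB'
  | .bar i => .bbar i

/-- `pathAdj q src tgt node u v` says that `(u, v)` is (an orientation of) one of
the `q` consecutive edges of the path from `src` to `tgt` whose `q - 1` internal
vertices are `node 0, …, node (q-2)` (for `q = 1` the path is the single edge
`(src, tgt)`). -/
def pathAdj (q : ℕ) {α : Type*} (src tgt : α) (node : Fin (q - 1) → α) (u v : α) : Prop :=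
  (q = 1 ∧ u = src ∧ v = tgt) ∨
  (∃ h0 : 0 < q - 1, u = src ∧ v = node ⟨0, h0⟩) ∨
  (∃ t : Fin (q - 1), ∃ ht : t.val + 1 < q - 1, u = node t ∧ v = node ⟨t.val + 1, ht⟩) ∨
  (∃ h0 : 0 < q - 1, u = node ⟨q - 2, by omega⟩ ∧ v = tgt)

/-- Base relation generating the edges of the approximate-diameter lower-bound
graph `G_{x,y}`: the subdivided fixed edges on each side, the single cross edges
`(fA h, tB h)`, `(tA h, fB h)` and `(cA', cB')`, and the single input edges
`(a i, cA')` present iff `x i = 0` and `(b i, cB')` present iff `y i = 0`. -/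
def adRel (k logk q : ℕ) (x y : Fin k → Bool) (u v : ADVertex k logk q) : Prop :=
  (∃ e : SideEdge k logk,
    pathAdj q (ADVertex.base (srcA k logk e)) (ADVertex.base (tgtA k logk e))
      (fun t => ADVertex.pA e t) u v) ∨
  (∃ e : SideEdge k logk,
    pathAdj q (ADVertex.base (srcB k logk e)) (ADVertex.base (tgtB k logk e))
      (fun t => ADVertex.pB e t) u v) ∨
  (∃ h : Fin logk, u = ADVertex.base (.fA h) ∧ v = ADVertex.base (.tB h)) ∨
  (∃ h : Fin logk, u = ADVertex.base (.tA h) ∧ v = ADVertex.base (.fB h)) ∨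
  (u = ADVertex.base .cA' ∧ v = ADVertex.base .cB') ∨
  (∃ i : Fin k, x i = false ∧ u = ADVertex.base (.a i) ∧ v = ADVertex.base .cA') ∨
  (∃ i : Fin k, y i = false ∧ u = ADVertex.base (.b i) ∧ v = ADVertex.base .cB')

/-- The approximate-diameter lower-bound graph `G_{x,y}`. -/
def adGraph (k logk q : ℕ) (x y : Fin k → Bool) : SimpleGraph (ADVertex k logk q) :=
  SimpleGraph.fromRel (adRel k logk q x y)

/-- `u` belongs to `A ∪ B ∪ {c̄_A, c̄_B}`. -/
def IsHub (k logk q : ℕ) (u : ADVertex k logk q) : Prop :=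
  (∃ i, u = ADVertex.base (.a i)) ∨ (∃ i, u = ADVertex.base (.b i)) ∨
    u = ADVertex.base .cA' ∨ u = ADVertex.base .cB'

theorem Nat.exists_testBit_ne_of_lt_two_pow {i j n : ℕ} (hi : i < 2 ^ n) (hj : j < 2 ^ n)
    (hij : i ≠ j) : ∃ h < n, i.testBit h ≠ j.testBit h := by
  by_contra! hbits
  refine hij (Nat.eq_of_testBit_eq fun m => ?_)
  by_cases hm : m < n
  · exact hbits m hm
  · have hpow : 2 ^ n ≤ 2 ^ m := Nat.pow_le_pow_right two_pos (not_lt.mp hm)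
    rw [Nat.testBit_eq_false_of_lt (hi.trans_le hpow),
      Nat.testBit_eq_false_of_lt (hj.trans_le hpow)]

namespace SimpleGraph

variable {V : Type*} {G : SimpleGraph V}

theorem edist_le_of_adj_succ (f : ℕ → V) (n : ℕ) (hf : ∀ m < n, G.Adj (f m) (f (m + 1))) :
    G.edist (f 0) (f n) ≤ n := by
  induction n with
  | zero => simp
  | succ n ih =>
    calc G.edist (f 0) (f (n + 1)) ≤ G.edist (f 0) (f n) + G.edist (f n) (f (n + 1)) :=
          G.edist_triangle
      _ ≤ n + 1 := add_le_add (ih fun m hm => hf m (by omega))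
          (edist_eq_one_iff_adj.mpr (hf n (by omega))).le
      _ = (n + 1 : ℕ) := by push_cast; rfl

end SimpleGraph

section pathAdj

variable {α : Type*} {q : ℕ} {src tgt : α} {node : Fin (q - 1) → α}

theorem pathAdj.ne (hst : src ≠ tgt) (hnode : Function.Injective node)
    (hsrc : ∀ t, node t ≠ src) (htgt : ∀ t, node t ≠ tgt) {u v : α}
    (huv : pathAdj q src tgt node u v) : u ≠ v := by
  rcases huv with ⟨-, rfl, rfl⟩ | ⟨-, rfl, rfl⟩ | ⟨t, -, rfl, rfl⟩ | ⟨-, rfl, rfl⟩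
  · exact hst
  · exact (hsrc _).symm
  · exact fun h => by simpa [Fin.ext_iff] using hnode h
  · exact htgt _

def pathVertex (q : ℕ) (src tgt : α) (node : Fin (q - 1) → α) (m : ℕ) : α :=
  if h0 : m = 0 then src else if hm : m < q then node ⟨m - 1, by omega⟩ else tgt

theorem pathAdj_pathVertex {m : ℕ} (hm : m < q) :
    pathAdj q src tgt node (pathVertex q src tgt node m) (pathVertex q src tgt node (m + 1)) := by
  unfold pathVertex pathAdj
  rcases Nat.eq_zero_or_pos m with rfl | hm0
  · by_cases hq1 : q = 1
    · simp [hq1]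
    · simp [show 1 < q by omega, show 0 < q - 1 by omega]
  · by_cases hlast : m + 1 < q
    · refine Or.inr (Or.inr (Or.inl ⟨⟨m - 1, by omega⟩, by simp; omega, ?_, ?_⟩))
      · simp [hm0.ne', hm]
      · simp [hlast, Nat.sub_add_cancel hm0]
    · refine Or.inr (Or.inr (Or.inr ⟨by omega, ?_, ?_⟩))
      · simp [hm0.ne', hm]; congr 2; omega
      · simp [hlast]

theorem SimpleGraph.edist_le_of_pathAdj {G : SimpleGraph α} (hq : 1 ≤ q)
    (hadj : ∀ u v, pathAdj q src tgt node u v → G.Adj u v) : G.edist src tgt ≤ q := by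
  have hsrc : pathVertex q src tgt node 0 = src := by simp [pathVertex]
  have htgt : pathVertex q src tgt node q = tgt := by simp [pathVertex]; omega
  simpa [hsrc, htgt] using
    G.edist_le_of_adj_succ (pathVertex q src tgt node) q fun _ hm =>
      hadj _ _ (pathAdj_pathVertex hm)

end pathAdj

open SimpleGraph

section adGraph

variable {k logk q : ℕ} {x y : Fin k → Bool}

theorem srcA_ne_tgtA (e : SideEdge k logk) : srcA k logk e ≠ tgtA k logk e := by
  cases e <;> simp [srcA, tgtA]
  split <;> simp

theorem srcB_ne_tgtB (e : SideEdge k logk) : srcB k logk e ≠ tgtB k logk e := by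
  cases e <;> simp [srcB, tgtB]
  split <;> simp

theorem adGraph_adj_of_adRel {u v : ADVertex k logk q} (hne : u ≠ v)
    (huv : adRel k logk q x y u v) : (adGraph k logk q x y).Adj u v :=
  (fromRel_adj _ u v).mpr ⟨hne, Or.inl huv⟩

theorem adGraph_edist_srcA_tgtA_le (hq : 1 ≤ q) (e : SideEdge k logk) :
    (adGraph k logk q x y).edist (.base (srcA k logk e)) (.base (tgtA k logk e)) ≤ q :=
  edist_le_of_pathAdj hq fun _ _ huv => adGraph_adj_of_adRel
    (huv.ne (by simpa using srcA_ne_tgtA e) (fun _ _ h => (ADVertex.pA.inj h).2)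
      (by simp) (by simp)) (Or.inl ⟨e, huv⟩)

theorem adGraph_edist_srcB_tgtB_le (hq : 1 ≤ q) (e : SideEdge k logk) :
    (adGraph k logk q x y).edist (.base (srcB k logk e)) (.base (tgtB k logk e)) ≤ q :=
  edist_le_of_pathAdj hq fun _ _ huv => adGraph_adj_of_adRel
    (huv.ne (by simpa using srcB_ne_tgtB e) (fun _ _ h => (ADVertex.pB.inj h).2)
      (by simp) (by simp)) (Or.inr (Or.inl ⟨e, huv⟩))

theorem adGraph_adj_cA'_cB' :
    (adGraph k logk q x y).Adj (.base .cA') (.base .cB') :=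
  adGraph_adj_of_adRel nofun (Or.inr (Or.inr (Or.inr (Or.inr (Or.inl ⟨rfl, rfl⟩)))))

theorem adGraph_adj_bitNode {i j : Fin k} {h : Fin logk}
    (hbit : i.val.testBit h ≠ j.val.testBit h) :
    (adGraph k logk q x y).Adj (.base (tgtA k logk (.aBit i h)))
      (.base (tgtB k logk (.aBit j h))) := by
  refine adGraph_adj_of_adRel ?_ ?_ <;>
    cases hi : i.val.testBit h <;> cases hj : j.val.testBit h <;> simp_all [tgtA, tgtB, adRel]

def IsHubA (k logk q : ℕ) (u : ADVertex k logk q) : Prop :=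
  (∃ i, u = ADVertex.base (.a i)) ∨ u = ADVertex.base .cA'

def IsHubB (k logk q : ℕ) (u : ADVertex k logk q) : Prop :=
  (∃ i, u = ADVertex.base (.b i)) ∨ u = ADVertex.base .cB'

theorem isHub_iff_isHubA_or_isHubB {u : ADVertex k logk q} :
    IsHub k logk q u ↔ IsHubA k logk q u ∨ IsHubB k logk q u := by
  unfold IsHub IsHubA IsHubB
  tauto

theorem IsHubA.edist_cA_le (hq : 1 ≤ q) {u : ADVertex k logk q} (hu : IsHubA k logk q u) :
    (adGraph k logk q x y).edist u (.base .cA) ≤ q := by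
  rcases hu with ⟨i, rfl⟩ | rfl
  · exact adGraph_edist_srcA_tgtA_le hq (.aC i)
  · rw [SimpleGraph.edist_comm]
    exact adGraph_edist_srcA_tgtA_le hq .cc

theorem IsHubB.edist_cB_le (hq : 1 ≤ q) {u : ADVertex k logk q} (hu : IsHubB k logk q u) :
    (adGraph k logk q x y).edist u (.base .cB) ≤ q := by
  rcases hu with ⟨i, rfl⟩ | rfl
  · exact adGraph_edist_srcB_tgtB_le hq (.aC i)
  · rw [SimpleGraph.edist_comm]
    exact adGraph_edist_srcB_tgtB_le hq .cc

theorem IsHubA.edist_le (hq : 1 ≤ q) {u v : ADVertex k logk q} (hu : IsHubA k logk q u)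
    (hv : IsHubA k logk q v) : (adGraph k logk q x y).edist u v ≤ 2 * q :=
  calc _ ≤ (adGraph k logk q x y).edist u (.base .cA)
        + (adGraph k logk q x y).edist (.base .cA) v := SimpleGraph.edist_triangle
    _ ≤ q + q := add_le_add (hu.edist_cA_le hq) (SimpleGraph.edist_comm ▸ hv.edist_cA_le hq)
    _ = 2 * q := (two_mul _).symm

theorem IsHubB.edist_le (hq : 1 ≤ q) {u v : ADVertex k logk q} (hu : IsHubB k logk q u)
    (hv : IsHubB k logk q v) : (adGraph k logk q x y).edist u v ≤ 2 * q :=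
  calc _ ≤ (adGraph k logk q x y).edist u (.base .cB)
        + (adGraph k logk q x y).edist (.base .cB) v := SimpleGraph.edist_triangle
    _ ≤ q + q := add_le_add (hu.edist_cB_le hq) (SimpleGraph.edist_comm ▸ hv.edist_cB_le hq)
    _ = 2 * q := (two_mul _).symm

theorem adGraph_edist_a_b_le (hq : 1 ≤ q) (hpow : k = 2 ^ logk) {i j : Fin k} (hij : i ≠ j) :
    (adGraph k logk q x y).edist (.base (.a i)) (.base (.b j)) ≤ 2 * q + 1 := by
  obtain ⟨h, hlt, hbit⟩ := Nat.exists_testBit_ne_of_lt_two_pow (i.isLt.trans_eq hpow)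
    (j.isLt.trans_eq hpow) (Fin.val_ne_of_ne hij)
  set G := adGraph k logk q x y
  set bitA : ADVertex k logk q := .base (tgtA k logk (.aBit i ⟨h, hlt⟩))
  set bitB : ADVertex k logk q := .base (tgtB k logk (.aBit j ⟨h, hlt⟩))
  calc G.edist (.base (.a i)) (.base (.b j))
      ≤ G.edist (.base (.a i)) bitA + G.edist bitA bitB + G.edist bitB (.base (.b j)) :=
        G.edist_triangle.trans (add_le_add_left G.edist_triangle _)
    _ ≤ q + 1 + q := by
        gcongr
        · exact adGraph_edist_srcA_tgtA_le hq (.aBit i ⟨h, hlt⟩)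
        · exact (edist_eq_one_iff_adj.mpr (adGraph_adj_bitNode hbit)).le
        · rw [SimpleGraph.edist_comm]
          exact adGraph_edist_srcB_tgtB_le hq (.aBit j ⟨h, hlt⟩)
    _ = 2 * q + 1 := by ring

theorem IsHubA.edist_le_of_isHubB (hq : 1 ≤ q) (hpow : k = 2 ^ logk)
    {u v : ADVertex k logk q} (hu : IsHubA k logk q u) (hv : IsHubB k logk q v)
    (huv : ¬∃ i, u = .base (.a i) ∧ v = .base (.b i)) :
    (adGraph k logk q x y).edist u v ≤ 2 * q + 1 := by
  set G := adGraph k logk q x y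
  have hcc : G.edist (.base .cA') (.base .cB') = 1 :=
    edist_eq_one_iff_adj.mpr adGraph_adj_cA'_cB'
  rcases hu with ⟨i, rfl⟩ | rfl
  · rcases hv with ⟨j, rfl⟩ | rfl
    · exact adGraph_edist_a_b_le hq hpow fun hij => huv ⟨i, rfl, hij ▸ rfl⟩
    · calc G.edist (.base (.a i)) (.base .cB')
          ≤ G.edist (.base (.a i)) (.base .cA') + G.edist (.base .cA') (.base .cB') :=
            G.edist_triangle
        _ ≤ 2 * q + 1 :=
            add_le_add (IsHubA.edist_le hq (Or.inl ⟨i, rfl⟩) (Or.inr rfl)) hcc.le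
  · calc G.edist (.base .cA') v
        ≤ G.edist (.base .cA') (.base .cB') + G.edist (.base .cB') v := G.edist_triangle
      _ ≤ 1 + 2 * q := add_le_add hcc.le (IsHubB.edist_le hq (Or.inr rfl) hv)
      _ = 2 * q + 1 := add_comm _ _

end adGraph

theorem adGraph_hub_dist_le_general (k logk q : ℕ) (hpow : k = 2 ^ logk)
    (hq : 1 ≤ q) (x y : Fin k → Bool) (u v : ADVertex k logk q)
    (hu : IsHub k logk q u) (hv : IsHub k logk q v)
    (h : ¬ ∃ i : Fin k,
      (u = ADVertex.base (.a i) ∧ v = ADVertex.base (.b i)) ∨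
      (u = ADVertex.base (.b i) ∧ v = ADVertex.base (.a i))) :
    (adGraph k logk q x y).edist u v ≤ (2 * q + 1 : ℕ) := by
  push_cast
  rcases isHub_iff_isHubA_or_isHubB.mp hu with hu | hu <;>
    rcases isHub_iff_isHubA_or_isHubB.mp hv with hv | hv
  · exact (hu.edist_le hq hv).trans le_self_add
  · exact hu.edist_le_of_isHubB hq hpow hv fun ⟨i, hi⟩ => h ⟨i, Or.inl hi⟩
  · rw [SimpleGraph.edist_comm]
    exact hv.edist_le_of_isHubB hq hpow hu fun ⟨i, hi⟩ => h ⟨i, Or.inr hi.symm⟩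
  · exact (hu.edist_le hq hv).trans le_self_add

/-- in the approximate-diameter lower-bound graph `G_{x,y}`, for all
nodes `u, v ∈ A ∪ B ∪ {c̄_A, c̄_B}`, if there is no index `i` with
`{u, v} = {a i, b i}`, then `dist(u, v) ≤ 2q + 1`. -/
theorem adGraph_hub_dist_le (k logk q : ℕ) (hk : 2 ≤ k) (hpow : k = 2 ^ logk)
    (hq : 1 ≤ q) (x y : Fin k → Bool) (u v : ADVertex k logk q)
    (hu : IsHub k logk q u) (hv : IsHub k logk q v)
    (h : ¬ ∃ i : Fin k,
      (u = ADVertex.base (.a i) ∧ v = ADVertex.base (.b i)) ∨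
      (u = ADVertex.base (.b i) ∧ v = ADVertex.base (.a i))) :
    (adGraph k logk q x y).edist u v ≤ (2 * q + 1 : ℕ) :=
  adGraph_hub_dist_le_general k logk q hpow hq x y u v hu hv h
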